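/- arXiv:1508.06015 — 4 statements merged into one kernel-verified Lean document; each statement's English description precedes it below -/
import Mathlib

section
/- Let V be the valuation ring of v on L and W the valuation ring of the Gauss extension w of v to L(Y). Then the residue field of W is a simple transcendental extension of the residue field of V, generated by the residue of Y. -/
/-!
For `p ∈ V[Y]` the Gauss valuation of `p(Y)` is `1` exactly when some coefficient of `p` is a
unit, i.e. when the reduction `p̄` is nonzero. Since the residue of `p(Y)` is `p̄(Ȳ)`, this
vanishes only for `p̄ = 0`, so `Ȳ` is transcendental. Every `x ∈ W` is a quotient `f / g` of
polynomials; dividing both by a coefficient of `g` of maximal value gives `w g = 1`, hence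
`w f ≤ 1`, and then `x̄ = f̄(Ȳ) / ḡ(Ȳ)`.
-/

open Polynomial IsLocalRing

theorem Valuation.isUnit_valuationSubring_iff {K Γ : Type*} [Field K]
    [LinearOrderedCommGroupWithZero Γ] (u : Valuation K Γ) {a : u.valuationSubring} :
    IsUnit a ↔ u a = 1 :=
  (Valuation.integer.integers u).isUnit_iff_valuation_eq_one

theorem Polynomial.aeval_map_rangeRestrictField {K M : Type*} [Field K] [Field M]
    (f : K →+* M) (p : K[X]) (x : M) :
    aeval x (p.map f.rangeRestrictField) = p.eval₂ f x := by
  rw [aeval_def, eval₂_map]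
  rfl

namespace IsLocalRing

variable {A B : Type*} [CommRing A] [IsLocalRing A] [CommRing B] [IsLocalRing B]
  (ι : A →+* B) [IsLocalHom ι]

theorem residue_eval₂ (p : A[X]) (y : B) :
    residue B (p.eval₂ ι y) = (p.map (residue A)).eval₂ (ResidueField.map ι) (residue B y) := by
  rw [hom_eval₂, eval₂_map, ResidueField.map_comp_residue]

theorem residue_eval₂_mem_adjoin (p : A[X]) (y : B) :
    residue B (p.eval₂ ι y) ∈
      IntermediateField.adjoin (ResidueField.map ι).fieldRange {residue B y} := by
  rw [residue_eval₂, ← aeval_map_rangeRestrictField]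
  exact IntermediateField.algebra_adjoin_le_adjoin _ _ (aeval_mem_adjoin_singleton _ _)

end IsLocalRing

section GaussExtension

variable {L : Type*} [Field L] {Γ : Type*} [LinearOrderedCommGroupWithZero Γ]

/-- The paper's `minᵢ v(aᵢ)` is a maximum for multiplicatively written valuations. -/
def Valuation.IsGaussExtension (v : Valuation L Γ) (w : Valuation (RatFunc L) Γ) : Prop :=
  ∀ (f : L[X]) (hf : f ≠ 0), w (algebraMap L[X] (RatFunc L) f) =
    f.support.sup' (support_nonempty.mpr hf) fun i => v (f.coeff i)

namespace Valuation.IsGaussExtension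

variable {v : Valuation L Γ} {w : Valuation (RatFunc L) Γ} (hw : v.IsGaussExtension w)
include hw

theorem apply_algebraMap (x : L) : w (algebraMap L (RatFunc L) x) = v x := by
  rcases eq_or_ne x 0 with rfl | hx
  · simp
  · rw [IsScalarTower.algebraMap_apply L L[X] (RatFunc L), algebraMap_eq,
      hw (C x) (C_ne_zero.mpr hx)]
    simp only [support_C hx, Finset.sup'_singleton, coeff_C_zero]

theorem le_one_iff {F : L[X]} :
    w (algebraMap L[X] (RatFunc L) F) ≤ 1 ↔ ∀ i, v (F.coeff i) ≤ 1 := by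
  rcases eq_or_ne F 0 with rfl | hF
  · simp
  · rw [hw F hF, Finset.sup'_le_iff]
    refine ⟨fun h i => ?_, fun h i _ => h i⟩
    by_cases hi : i ∈ F.support
    · exact h i hi
    · simp [notMem_support_iff.mp hi]

theorem eq_one_of_coeff_eq_one {F : L[X]} (hF : ∀ i, v (F.coeff i) ≤ 1) {i : ℕ}
    (hi : v (F.coeff i) = 1) : w (algebraMap L[X] (RatFunc L) F) = 1 := by
  have hFi : F.coeff i ≠ 0 := fun h => by simp [h] at hi
  refine le_antisymm ((hw.le_one_iff).mpr hF) ?_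
  rw [hw F (fun h => hFi (by simp [h])), ← hi]
  exact Finset.le_sup' (fun i => v (F.coeff i)) (mem_support_iff.mpr hFi)

theorem exists_C_mul_eq_one {g : L[X]} (hg : g ≠ 0) :
    ∃ c : L, w (algebraMap L[X] (RatFunc L) (C c * g)) = 1 := by
  obtain ⟨j, hj, hjmax⟩ := Finset.exists_mem_eq_sup' (support_nonempty.mpr hg)
    fun i => v (g.coeff i)
  have hvj : v (g.coeff j) ≠ 0 := by simpa using mem_support_iff.mp hj
  refine ⟨(g.coeff j)⁻¹, ?_⟩
  rw [map_mul, ← algebraMap_eq, ← IsScalarTower.algebraMap_apply, map_mul, hw.apply_algebraMap,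
    hw g hg, hjmax, map_inv₀, inv_mul_cancel₀ hvj]

theorem exists_map_subtype_eq {F : L[X]} (hF : w (algebraMap L[X] (RatFunc L) F) ≤ 1) :
    ∃ p : v.valuationSubring[X], p.map v.valuationSubring.subtype = F :=
  (lifts_iff_coeff_lifts F).mpr fun i => ⟨⟨F.coeff i, (hw.le_one_iff).mp hF i⟩, rfl⟩

end Valuation.IsGaussExtension

section Residue

variable {v : Valuation L Γ} {w : Valuation (RatFunc L) Γ}
  {ι : v.valuationSubring →+* w.valuationSubring}
  (hι : ∀ a : v.valuationSubring, (ι a : RatFunc L) = algebraMap L (RatFunc L) ↑a)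
  (hY : RatFunc.X ∈ w.valuationSubring)
include hι

theorem coe_eval₂_X_eq_algebraMap_map (p : v.valuationSubring[X]) :
    ((p.eval₂ ι ⟨RatFunc.X, hY⟩ : w.valuationSubring) : RatFunc L) =
      algebraMap L[X] (RatFunc L) (p.map v.valuationSubring.subtype) := by
  have h : w.valuationSubring.subtype.comp (eval₂RingHom ι ⟨RatFunc.X, hY⟩) =
      (algebraMap L[X] (RatFunc L)).comp (mapRingHom v.valuationSubring.subtype) :=
    ringHom_ext (fun a => by simp [hι]) (by simp)
  exact RingHom.congr_fun h p

variable (hw : v.IsGaussExtension w)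
include hw

theorem isUnit_eval₂_X_of_map_residue_ne_zero {p : v.valuationSubring[X]}
    (hp : p.map (residue _) ≠ 0) : IsUnit (p.eval₂ ι ⟨RatFunc.X, hY⟩) := by
  obtain ⟨i, hi⟩ : ∃ i, residue _ (p.coeff i) ≠ 0 := by
    by_contra! h
    exact hp (ext fun i => by simp [h])
  rw [residue_ne_zero_iff_isUnit, Valuation.isUnit_valuationSubring_iff] at hi
  rw [Valuation.isUnit_valuationSubring_iff, coe_eval₂_X_eq_algebraMap_map hι]
  exact hw.eq_one_of_coeff_eq_one (fun j => by rw [coeff_map]; exact (p.coeff j).2)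
    (by simpa using hi)

theorem exists_residue_eq_div (z : ResidueField w.valuationSubring) :
    ∃ p q : v.valuationSubring[X], z =
      residue _ (p.eval₂ ι ⟨RatFunc.X, hY⟩) / residue _ (q.eval₂ ι ⟨RatFunc.X, hY⟩) := by
  obtain ⟨x, rfl⟩ := residue_surjective z
  obtain ⟨c, hc⟩ := hw.exists_C_mul_eq_one (RatFunc.denom_ne_zero (x : RatFunc L))
  have hx : algebraMap L[X] (RatFunc L) (C c * (x : RatFunc L).num) =
      x * algebraMap L[X] (RatFunc L) (C c * (x : RatFunc L).denom) := by
    have hnum := (div_eq_iff (RatFunc.algebraMap_ne_zero (RatFunc.denom_ne_zero _))).mp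
      (RatFunc.num_div_denom (x : RatFunc L))
    rw [map_mul, map_mul, hnum]
    ring
  obtain ⟨p, hp⟩ := hw.exists_map_subtype_eq
    (show w (algebraMap L[X] (RatFunc L) (C c * (x : RatFunc L).num)) ≤ 1 by
      rw [hx, map_mul, hc, mul_one]; exact x.2)
  obtain ⟨q, hq⟩ := hw.exists_map_subtype_eq hc.le
  have hqu : IsUnit (q.eval₂ ι ⟨RatFunc.X, hY⟩) := by
    rw [Valuation.isUnit_valuationSubring_iff, coe_eval₂_X_eq_algebraMap_map hι, hq, hc]
  refine ⟨p, q, ?_⟩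
  rw [eq_div_iff ((residue_ne_zero_iff_isUnit _).mpr hqu), ← map_mul]
  congr 1
  ext
  simp [coe_eval₂_X_eq_algebraMap_map hι, hp, hq, hx]

end Residue

end GaussExtension

/-- Let `V` be the valuation ring of `v` on `L` and `W` the valuation ring of the Gauss
extension `w` of `v` to `L(Y)`.  Then the residue field of `W` is a simple transcendental
extension of the residue field of `V`, generated by the residue `Ȳ` of `Y`:
`Ȳ` is transcendental over (the image of) `V/M(V)` and `W/M(W) = (V/M(V))(Ȳ)`. -/
theorem gauss_extension_residue_field_simple_transcendental
    (L : Type*) [Field L] (Γ : Type*) [LinearOrderedCommGroupWithZero Γ]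
    (v : Valuation L Γ)
    (w : Valuation (RatFunc L) Γ)
    (hw : ∀ (f : Polynomial L) (hf : f ≠ 0),
        w (algebraMap (Polynomial L) (RatFunc L) f)
          = f.support.sup' (Polynomial.support_nonempty.mpr hf)
              fun i => v (f.coeff i))
    -- `ι` is the inclusion of the valuation ring `V` of `v` into the valuation ring `W`
    -- of `w`, induced by the inclusion `L ⊆ L(Y)`:
    (ι : v.valuationSubring →+* w.valuationSubring) [IsLocalHom ι]
    (hι : ∀ a : v.valuationSubring, (ι a : RatFunc L) = algebraMap L (RatFunc L) ↑a)
    -- `Y` belongs to `W`: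
    (hY : RatFunc.X ∈ w.valuationSubring) :
    Transcendental ((IsLocalRing.ResidueField.map ι).fieldRange)
        (IsLocalRing.residue ↥(w.valuationSubring) ⟨RatFunc.X, hY⟩) ∧
    IntermediateField.adjoin ((IsLocalRing.ResidueField.map ι).fieldRange)
        {IsLocalRing.residue ↥(w.valuationSubring) ⟨RatFunc.X, hY⟩} = ⊤ := by
  refine ⟨?_, eq_top_iff.mpr fun z _ => ?_⟩
  · rintro ⟨q, hq0, hq⟩
    obtain ⟨q, rfl⟩ := map_surjective _ (ResidueField.map ι).rangeRestrictField_bijective.2 q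
    obtain ⟨p, rfl⟩ := map_surjective _ residue_surjective q
    rw [aeval_map_rangeRestrictField, ← residue_eval₂] at hq
    have hp : p.map (residue _) ≠ 0 := by rintro h; simp [h] at hq0
    exact ((isUnit_eval₂_X_of_map_residue_ne_zero hι hY hw hp).map _).ne_zero hq
  · obtain ⟨p, q, rfl⟩ := exists_residue_eq_div hι hY hw z
    exact div_mem (residue_eval₂_mem_adjoin ι p _) (residue_eval₂_mem_adjoin ι q _)
end

section
/- Let R ⊆ V where V is the valuation ring of v on L and suppose I is a nonzero ideal of a noetherian domain R. For f = ∑ₙ fₙZⁿ in the Rees ring E = R[IZ], the formula w'(f) = min{ v(fₙ) − n·V(I) : fₙ ≠ 0 } defines (the restriction to E of) a valuation of L(Z); moreover, choosing x ∈ I with v(x) = V(I) and setting Y = xZ, this valuation equals the Gauss extension of v to L(Y) = L(Z). -/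
/-- Let `R ⊆ V` (the valuation ring of `v` on `L`), `R` a noetherian domain with quotient
field `L`, and `I` a nonzero ideal of `R`.  For `f = ∑ₙ fₙ Zⁿ` in the Rees ring
`E = R[IZ]`, the formula `w'(f) = min { v(fₙ) − n·V(I) }` (multiplicatively:
`max v(fₙ)·v(x)⁻ⁿ`) defines the restriction to `E` of a valuation of `L(Z)`; choosing
`x ∈ I` with `v(x) = V(I)` and setting `Y = xZ` (i.e. `Z = Y/x`), this valuation is the
Gauss extension `w` of `v` to `L(Y) = L(Z)`. -/
theorem rees_valuation_eq_gauss_extension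
    (L : Type*) [Field L] (Γ : Type*) [LinearOrderedCommGroupWithZero Γ]
    (v : Valuation L Γ)
    (R : Subring L) [IsNoetherianRing R]
    (hRL : ∀ a : L, ∃ r s : R, (s : L) ≠ 0 ∧ a * s = r)  -- L = QF(R)
    (hRV : ∀ r : R, v r ≤ 1)                              -- R ⊆ V
    (I : Ideal R) (hI : I ≠ ⊥)
    (x : R) (hx : x ∈ I) (hx0 : (x : L) ≠ 0)
    (hxmin : ∀ y ∈ I, v ↑y ≤ v ↑x)                        -- v(x) = V(I)
    -- `w` is the Gauss extension of `v` with respect to the variable `Y`: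
    (w : Valuation (RatFunc L) Γ)
    (hw : ∀ (f : Polynomial L) (hf : f ≠ 0),
        w (algebraMap (Polynomial L) (RatFunc L) f)
          = f.support.sup' (Polynomial.support_nonempty.mpr hf)
              fun i => v (f.coeff i)) :
    ∀ (f : Polynomial L) (hf : f ≠ 0),
      (∀ n : ℕ, ∃ a ∈ I ^ n, (↑a : L) = f.coeff n) →
      w (f.sum fun n a =>
            algebraMap L (RatFunc L) a *
              (RatFunc.X / algebraMap L (RatFunc L) ↑x) ^ n)
        = f.support.sup' (Polynomial.support_nonempty.mpr hf)
            fun n => v (f.coeff n) * (v ↑x)⁻¹ ^ n := by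
  intro f hf _
  set c : L := ((x : L))⁻¹ with hc
  have hc0 : c ≠ 0 := inv_ne_zero hx0
  set g : Polynomial L := ∑ n ∈ f.support, Polynomial.C (f.coeff n * c ^ n) * Polynomial.X ^ n
    with hgdef
  have hgc : ∀ k, g.coeff k = f.coeff k * c ^ k := by
    intro k
    rw [hgdef, Polynomial.finset_sum_coeff]
    simp only [Polynomial.coeff_C_mul, Polynomial.coeff_X_pow, mul_ite, mul_one, mul_zero]
    rw [Finset.sum_ite_eq f.support k (fun n => f.coeff n * c ^ n)]
    by_cases hk : k ∈ f.support
    · simp [hk]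
    · simp [hk, Polynomial.notMem_support_iff.mp hk]
  have hsupp : g.support = f.support := by
    ext k
    simp only [Polynomial.mem_support_iff, hgc k, mul_ne_zero_iff]
    exact ⟨fun h => h.1, fun h => ⟨h, pow_ne_zero _ hc0⟩⟩
  have hg : g ≠ 0 := by
    intro h
    apply hf
    ext k
    have := hgc k
    rw [h] at this
    simp only [Polynomial.coeff_zero] at this ⊢
    exact (mul_eq_zero.mp this.symm).resolve_right (pow_ne_zero _ hc0)
  have key : (algebraMap (Polynomial L) (RatFunc L)) g
      = f.sum fun n a =>
          algebraMap L (RatFunc L) a *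
            (RatFunc.X / algebraMap L (RatFunc L) ↑x) ^ n := by
    rw [hgdef, map_sum, Polynomial.sum]
    refine Finset.sum_congr rfl fun n _ => ?_
    rw [map_mul, map_pow, RatFunc.algebraMap_X]
    rw [RatFunc.algebraMap_C, RatFunc.C, map_mul, map_pow, hc, map_inv₀]
    rw [div_pow, div_eq_mul_inv, ← inv_pow]
    ring
  rw [← key, hw g hg]
  have := Finset.sup'_congr (Polynomial.support_nonempty.mpr hg)
    (s := g.support) (t := f.support) hsupp
    (f := fun i => v (g.coeff i))
    (g := fun n => v (f.coeff n) * (v (x : L))⁻¹ ^ n) ?_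
  · exact this
  · intro n _
    show v (g.coeff n) = v (f.coeff n) * (v (x : L))⁻¹ ^ n
    rw [hgc n, map_mul, map_pow, hc, map_inv₀]
end

section
/- Let R be a normal noetherian domain and I a nonzero normal ideal of R (i.e., every power Iⁿ is integrally closed). Then the Rees ring E = R[IZ] is a normal noetherian domain. -/
/-- An ideal `J` of `R` is integrally closed (complete) if every element of `R` integral
over `J` (i.e. satisfying an equation `rⁿ + a₁ rⁿ⁻¹ + ⋯ + aₙ = 0` with `aᵢ ∈ Jⁱ`)
belongs to `J`. -/
def Ideal.IsIntegrallyClosedIdeal {R : Type*} [CommRing R] (J : Ideal R) : Prop :=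
  ∀ r : R,
    (∃ n : ℕ, 0 < n ∧ ∃ a : ℕ → R,
        (∀ i, 1 ≤ i → i ≤ n → a i ∈ J ^ i) ∧
        r ^ n + ∑ i ∈ Finset.Icc 1 n, a i * r ^ (n - i) = 0) →
    r ∈ J

/-- An ideal is normal if all its powers are integrally closed. -/
def Ideal.IsNormalIdeal {R : Type*} [CommRing R] (J : Ideal R) : Prop :=
  ∀ n : ℕ, 1 ≤ n → (J ^ n).IsIntegrallyClosedIdeal

/-!
Since `R[X]` is a normal domain containing `E = R[IX]`, it suffices that `E` is integrally closed
in `R[X]`. The integral closure of a graded subalgebra of `R[X]` is graded: applying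
`f ↦ f(X·T)` to an equation of integral dependence of `f` over `E` shows that `f(X·T)` is
integral over `E[T]`, so its `T`-coefficients `fₙXⁿ` are integral over `E`. Comparing the
coefficients of `X^{km}` in an equation of integral dependence of `cXᵏ` over `E` yields one of
`c` over `Iᵏ`, whence `c ∈ Iᵏ` by normality of `I`.
-/

open Polynomial

namespace Polynomial

variable {R : Type*} [CommRing R]

variable (R) in
/-- `f ↦ f(X·T)`: the `T`-coefficients of the image are the homogeneous components of `f`. -/
noncomputable def componentsHom : R[X] →ₐ[R] R[X][X] :=
  aeval (C X * X)

theorem componentsHom_monomial (k : ℕ) (a : R) :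
    componentsHom R (monomial k a) = monomial k (monomial k a) := by
  rw [componentsHom, aeval_monomial, mul_pow, ← C_pow, ← mul_assoc, algebraMap_apply,
    algebraMap_eq, ← C_mul, C_mul_X_pow_eq_monomial, C_mul_X_pow_eq_monomial]

theorem coeff_componentsHom (f : R[X]) (n : ℕ) :
    (componentsHom R f).coeff n = monomial n (f.coeff n) := by
  induction f using Polynomial.induction_on' with
  | add p q hp hq => simp only [map_add, coeff_add, hp, hq]
  | monomial k a =>
    rw [componentsHom_monomial, coeff_monomial, coeff_monomial]
    split_ifs with h
    · rw [h]
    · rw [map_zero]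

def IsGradedSubalgebra (A : Subalgebra R R[X]) : Prop :=
  ∀ f ∈ A, ∀ n, monomial n (f.coeff n) ∈ A

namespace IsGradedSubalgebra

variable {A : Subalgebra R R[X]}

theorem componentsHom_mem_range (hA : IsGradedSubalgebra A) (f : A) :
    componentsHom R f ∈ (mapAlgHom A.val).range := by
  have hlifts : componentsHom R f ∈ lifts (A.val : A →+* R[X]) :=
    (lifts_iff_coeff_lifts _).mpr fun n ↦
      ⟨⟨_, hA f f.2 n⟩, (coeff_componentsHom (f : R[X]) n).symm⟩
  exact (mem_lifts _).mp hlifts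

noncomputable def componentsHom (hA : IsGradedSubalgebra A) : A →ₐ[R] A[X] :=
  (AlgEquiv.ofInjective (mapAlgHom A.val)
      (map_injective _ Subtype.val_injective)).symm.toAlgHom.comp
    (((Polynomial.componentsHom R).comp A.val).codRestrict _ hA.componentsHom_mem_range)

theorem map_val_componentsHom (hA : IsGradedSubalgebra A) (f : A) :
    (hA.componentsHom f).map A.val = Polynomial.componentsHom R f :=
  congrArg Subtype.val <|
    (AlgEquiv.ofInjective _ (map_injective _ Subtype.val_injective)).apply_symm_apply
      ⟨_, hA.componentsHom_mem_range f⟩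

attribute [local instance] Polynomial.algebra in
theorem isIntegral_monomial_coeff (hA : IsGradedSubalgebra A) {f : R[X]} (hf : IsIntegral A f)
    (n : ℕ) : IsIntegral A (monomial n (f.coeff n)) := by
  have hcomponents : IsIntegral A[X] (Polynomial.componentsHom R f) :=
    hf.map_of_comp_eq hA.componentsHom.toRingHom (Polynomial.componentsHom R).toRingHom
      (RingHom.ext hA.map_val_componentsHom)
  simpa only [coeff_componentsHom] using hcomponents.coeff n

end IsGradedSubalgebra

end Polynomial

theorem Ideal.IsIntegrallyClosedIdeal.mem_of_pow_add_sum_eq_zero {R : Type*} [CommRing R]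
    {J : Ideal R} (hJ : J.IsIntegrallyClosedIdeal) {r : R} {m : ℕ} {b : ℕ → R}
    (hb : ∀ j < m, b j ∈ J ^ (m - j)) (h : r ^ m + ∑ j ∈ Finset.range m, b j * r ^ j = 0) :
    r ∈ J := by
  rcases Nat.eq_zero_or_pos m with rfl | hm
  · have : Subsingleton R := subsingleton_of_zero_eq_one (by simpa using h.symm)
    exact Subsingleton.elim r 0 ▸ J.zero_mem
  refine hJ r ⟨m, hm, fun i ↦ b (m - i), fun i _ him ↦ ?_, ?_⟩
  · simpa only [Nat.sub_sub_self him] using hb (m - i) (by omega)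
  · rw [← h]
    congr 1
    refine Finset.sum_nbij' (m - ·) (m - ·) ?_ ?_ ?_ ?_ ?_ <;> intro i hi <;> grind

namespace reesAlgebra

variable {R : Type*} [CommRing R] {I : Ideal R}

theorem isGradedSubalgebra : IsGradedSubalgebra (reesAlgebra I) :=
  fun _ hf n ↦ monomial_mem.mpr (hf n)

theorem exists_pow_add_sum_eq_zero_of_isIntegral_monomial {k : ℕ} {c : R}
    (h : IsIntegral (reesAlgebra I) (monomial k c)) :
    ∃ (m : ℕ) (b : ℕ → R), (∀ j < m, b j ∈ (I ^ k) ^ (m - j)) ∧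
      c ^ m + ∑ j ∈ Finset.range m, b j * c ^ j = 0 := by
  obtain ⟨Q, hQ, hQc⟩ := h
  have hcoeff := congrArg (coeff · (k * Q.natDegree)) hQc
  simp only [eval₂_eq_sum_range, finsetSum_coeff, coeff_zero] at hcoeff
  set m := Q.natDegree
  refine ⟨m, fun j ↦ (Q.coeff j : R[X]).coeff (k * (m - j)), fun j _ ↦ ?_, ?_⟩
  · rw [← pow_mul]
    exact (Q.coeff j).2 _
  have hterm : ∀ j ∈ Finset.range (m + 1),
      (algebraMap _ R[X] (Q.coeff j) * monomial k c ^ j).coeff (k * m) =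
        (Q.coeff j : R[X]).coeff (k * (m - j)) * c ^ j := by
    intro j hj
    rw [Finset.mem_range] at hj
    have hkm : k * m = k * (m - j) + k * j := by rw [← mul_add, Nat.sub_add_cancel (by omega)]
    rw [monomial_pow, hkm, coeff_mul_monomial]
    rfl
  rw [Finset.sum_congr rfl hterm, Finset.sum_range_succ, hQ.coeff_natDegree] at hcoeff
  simpa [add_comm] using hcoeff

theorem isIntegrallyClosedIn (hI : I.IsNormalIdeal) :
    IsIntegrallyClosedIn (reesAlgebra I) R[X] := by
  refine Subring.isIntegrallyClosedIn_iff.mpr fun f hf k ↦ ?_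
  rcases Nat.eq_zero_or_pos k with rfl | hk
  · simp
  obtain ⟨m, b, hb, hc⟩ := exists_pow_add_sum_eq_zero_of_isIntegral_monomial <|
    isGradedSubalgebra.isIntegral_monomial_coeff hf k
  exact (hI k hk).mem_of_pow_add_sum_eq_zero hb hc

end reesAlgebra

theorem rees_ring_of_normal_ideal_is_normal_noetherian_domain_general
    (R : Type*) [CommRing R] [IsDomain R] [IsNoetherianRing R] [IsIntegrallyClosed R]
    (I : Ideal R) (hIn : I.IsNormalIdeal) :
    IsDomain (reesAlgebra I) ∧ IsNoetherianRing (reesAlgebra I) ∧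
      IsIntegrallyClosed (reesAlgebra I) := by
  have := reesAlgebra.isIntegrallyClosedIn hIn
  exact ⟨inferInstance, inferInstance, .of_isIntegrallyClosed_of_isIntegrallyClosedIn _ R[X]⟩

/-- If `R` is a normal noetherian domain and `I` a nonzero normal ideal of `R`,
then the Rees ring `E = R[IZ]` is a normal noetherian domain. -/
theorem rees_ring_of_normal_ideal_is_normal_noetherian_domain
    (R : Type*) [CommRing R] [IsDomain R] [IsNoetherianRing R] [IsIntegrallyClosed R]
    (I : Ideal R) (hI : I ≠ ⊥) (hIn : I.IsNormalIdeal) :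
    IsDomain (reesAlgebra I) ∧ IsNoetherianRing (reesAlgebra I) ∧
      IsIntegrallyClosed (reesAlgebra I) :=
  rees_ring_of_normal_ideal_is_normal_noetherian_domain_general R I hIn
end

section
/- Let R be a nonnull commutative ring, I an ideal, E = R[IZ] the Rees ring and Ê = R[Z⁻¹, IZ] the extended Rees ring inside R[Z, Z⁻¹]. Then E ∩ Z⁻¹Ê = IE, and this induces a ring isomorphism Ê/(Z⁻¹Ê) ≅ E/IE. -/
/-!
Both rings are described degreewise: `Ê` consists of the Laurent polynomials whose `n`-th
coefficient lies in `Iⁿ` (read as `R` for `n ≤ 0`), and `E` of those which moreover vanish in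
negative degrees. Multiplication by `Z` shifts degrees, so `E ∩ Z⁻¹Ê` is cut out inside `E` by
`aₙ ∈ Iⁿ⁺¹`, and so is `IE`, since `I • (⊕ Iⁿ Zⁿ) = ⊕ Iⁿ⁺¹ Zⁿ`. Every `f ∈ Ê` is its part in
nonnegative degrees, which lies in `E`, plus its part in negative degrees, which lies in `Z⁻¹Ê`;
hence `E → Ê/Z⁻¹Ê` is onto, with kernel `E ∩ Z⁻¹Ê = IE`.
-/

open LaurentPolynomial

namespace LaurentPolynomial

variable {R : Type*} [CommRing R]

theorem coeff_C_mul_T (a : R) (n m : ℤ) : (C a * T n).coeff m = if n = m then a else 0 := by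
  rw [← single_eq_C_mul_T, AddMonoidAlgebra.coeff_single, Finsupp.single_apply]

theorem coeff_T_mul (m : ℤ) (f : R[T;T⁻¹]) (n : ℤ) : (T m * f).coeff n = f.coeff (n - m) := by
  rw [T, AddMonoidAlgebra.coeff_single_mul_apply, one_mul, neg_add_eq_sub]

theorem exists_mem_eq_T_neg_mul_iff (m : ℤ) {f : R[T;T⁻¹]} {S : Set R[T;T⁻¹]} :
    (∃ g ∈ S, f = T (-m) * g) ↔ T m * f ∈ S := by
  constructor
  · rintro ⟨g, hg, rfl⟩
    rwa [← mul_assoc, ← T_add, add_neg_cancel, T_zero, one_mul]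
  · exact fun h => ⟨_, h, by rw [← mul_assoc, ← T_add, neg_add_cancel, T_zero, one_mul]⟩

def coeffSubmodule (F : ℤ → Ideal R) : Submodule R R[T;T⁻¹] where
  carrier := {f | ∀ n, f.coeff n ∈ F n}
  add_mem' hf hg n := add_mem (hf n) (hg n)
  zero_mem' _ := zero_mem _
  smul_mem' r _ hf n := Ideal.mul_mem_left _ r (hf n)

variable {F G H : ℤ → Ideal R}

@[simp]
theorem mem_coeffSubmodule {f : R[T;T⁻¹]} : f ∈ coeffSubmodule F ↔ ∀ n, f.coeff n ∈ F n :=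
  Iff.rfl

theorem coeffSubmodule_inf : coeffSubmodule (F ⊓ G) = coeffSubmodule F ⊓ coeffSubmodule G := by
  ext f
  simp only [mem_coeffSubmodule, Pi.inf_apply, Ideal.mem_inf, Submodule.mem_inf, forall_and]

theorem C_mul_T_mem_coeffSubmodule {a : R} {n : ℤ} (ha : a ∈ F n) :
    C a * T n ∈ coeffSubmodule F := fun m => by
  rw [coeff_C_mul_T]
  split_ifs with h
  · exact h ▸ ha
  · exact zero_mem _

theorem coeffSubmodule_le {N : Submodule R R[T;T⁻¹]} (h : ∀ n, ∀ a ∈ F n, C a * T n ∈ N) :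
    coeffSubmodule F ≤ N := fun f hf => by
  rw [← AddMonoidAlgebra.sum_coeff_single f]
  exact Submodule.finsuppSum_mem _ _ _ _ fun n _ =>
    single_eq_C_mul_T (f.coeff n) n ▸ h n _ (hf n)

theorem T_mul_mem_coeffSubmodule_iff (m : ℤ) {f : R[T;T⁻¹]} :
    T m * f ∈ coeffSubmodule F ↔ f ∈ coeffSubmodule (fun n => F (n + m)) := by
  simp only [mem_coeffSubmodule, coeff_T_mul]
  exact ⟨fun h n => by simpa using h (n + m), fun h n => by simpa using h (n - m)⟩

theorem mul_mem_coeffSubmodule (hFG : ∀ i j, F i * G j ≤ H (i + j)) {f g : R[T;T⁻¹]}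
    (hf : f ∈ coeffSubmodule F) (hg : g ∈ coeffSubmodule G) : f * g ∈ coeffSubmodule H := by
  classical
  intro n
  rw [AddMonoidAlgebra.coeff_mul]
  refine Submodule.finsuppSum_mem _ _ _ _ fun i _ => Submodule.finsuppSum_mem _ _ _ _ fun j _ => ?_
  split_ifs with hij
  · exact hij ▸ hFG i j (Ideal.mul_mem_mul (hf i) (hg j))
  · exact zero_mem _

theorem smul_coeffSubmodule (I : Ideal R) (F : ℤ → Ideal R) :
    I • coeffSubmodule F = coeffSubmodule (fun n => I * F n) := by
  refine le_antisymm (Submodule.smul_le.2 fun r hr f hf n => ?_)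
    (coeffSubmodule_le fun n a ha => ?_)
  · rw [AddMonoidAlgebra.coeff_smul_apply, smul_eq_mul]
    exact Ideal.mul_mem_mul hr (hf n)
  · refine Submodule.mul_induction_on ha (fun b hb c hc => ?_) fun x y hx hy => ?_
    · rw [map_mul, mul_assoc, ← smul_eq_C_mul]
      exact Submodule.smul_mem_smul hb (C_mul_T_mem_coeffSubmodule hc)
    · rw [map_add, add_mul]
      exact add_mem hx hy

noncomputable def coeffSubalgebra (F : ℤ → Ideal R) (one_mem : (1 : R) ∈ F 0)
    (mul_le : ∀ i j, F i * F j ≤ F (i + j)) : Subalgebra R R[T;T⁻¹] :=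
  (coeffSubmodule F).toSubalgebra (by simpa [T_zero] using C_mul_T_mem_coeffSubmodule one_mem)
    fun _ _ => mul_mem_coeffSubmodule mul_le

@[simp]
theorem toSubmodule_coeffSubalgebra {one_mem mul_le} :
    Subalgebra.toSubmodule (coeffSubalgebra F one_mem mul_le) = coeffSubmodule F :=
  Submodule.toSubalgebra_toSubmodule _ _ _

end LaurentPolynomial

noncomputable def Ideal.quotientComapRingEquiv {A B : Type*} [CommRing A] [CommRing B]
    (φ : A →+* B) (J : Ideal B) (hφ : Function.Surjective ((Ideal.Quotient.mk J).comp φ)) :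
    A ⧸ J.comap φ ≃+* B ⧸ J :=
  (Ideal.quotEquivOfEq (by rw [← RingHom.comap_ker, Ideal.mk_ker])).trans
    (RingHom.quotientKerEquivOfSurjective hφ)

namespace Subalgebra

variable {R A : Type*} [CommRing R] [CommRing A] [Algebra R A]

theorem mem_map_algebraMap_iff (I : Ideal R) {S : Subalgebra R A} (x : S) :
    x ∈ I.map (algebraMap R S) ↔ (x : A) ∈ I • Subalgebra.toSubmodule S := by
  have h : (⊤ : Submodule R S).map S.val.toLinearMap = Subalgebra.toSubmodule S := by
    ext; simp
  rw [← Submodule.restrictScalars_mem R, ← Ideal.smul_top_eq_map, ← h, ← Submodule.map_smul'',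
    ← SetLike.mem_coe (x := (x : A)), Submodule.map_coe]
  exact Subtype.val_injective.mem_set_image.symm

theorem mem_span_singleton_iff {S : Subalgebra R A} {z : A} (hz : z ∈ S) {x : S} :
    x ∈ Ideal.span {(⟨z, hz⟩ : S)} ↔ ∃ g ∈ S, (x : A) = z * g := by
  rw [Ideal.mem_span_singleton']
  constructor
  · rintro ⟨c, rfl⟩
    exact ⟨c, c.2, mul_comm _ _⟩
  · rintro ⟨g, hg, h⟩
    exact ⟨⟨g, hg⟩, Subtype.ext (h.trans (mul_comm _ _)).symm⟩

theorem nonempty_quotient_span_singleton_ringEquiv {S S' : Subalgebra R A} (hle : S ≤ S')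
    {z : A} (hz : z ∈ S') {J : Ideal S} (hsum : ∀ f ∈ S', ∃ e ∈ S, ∃ g ∈ S', f - e = z * g)
    (hJ : ∀ x : S, x ∈ J ↔ ∃ g ∈ S', (x : A) = z * g) :
    Nonempty ((S' ⧸ Ideal.span {(⟨z, hz⟩ : S')}) ≃+* S ⧸ J) := by
  let φ : S →+* S' := Subalgebra.inclusion hle
  have hsurj : Function.Surjective ((Ideal.Quotient.mk (Ideal.span {⟨z, hz⟩})).comp φ) := by
    intro q
    obtain ⟨f, rfl⟩ := Ideal.Quotient.mk_surjective q
    obtain ⟨e, he, g, hg, hfe⟩ := hsum f f.2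
    exact ⟨⟨e, he⟩, (Ideal.Quotient.eq.2 ((mem_span_singleton_iff hz).2 ⟨g, hg, hfe⟩)).symm⟩
  have hcomap : (Ideal.span {⟨z, hz⟩}).comap φ = J := by
    ext x
    rw [Ideal.mem_comap, mem_span_singleton_iff, hJ]
    rfl
  exact ⟨(Ideal.quotientComapRingEquiv φ _ hsurj).symm.trans (Ideal.quotEquivOfEq hcomap)⟩

end Subalgebra

namespace Ideal

variable {R : Type*} [CommRing R] (I : Ideal R)

theorem pow_toNat_mul_pow_toNat_le (i j : ℤ) : I ^ i.toNat * I ^ j.toNat ≤ I ^ (i + j).toNat := by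
  rw [← pow_add]
  exact pow_le_pow_right (by omega)

def reesCoeff (n : ℤ) : Ideal R := if n < 0 then ⊥ else I ^ n.toNat

theorem reesCoeff_mul_le (i j : ℤ) : I.reesCoeff i * I.reesCoeff j ≤ I.reesCoeff (i + j) := by
  unfold reesCoeff
  split_ifs <;> first | (exfalso; omega) | simp | exact I.pow_toNat_mul_pow_toNat_le i j

theorem mul_reesCoeff (n : ℤ) : I * I.reesCoeff n = I.reesCoeff n ⊓ I ^ (n + 1).toNat := by
  unfold reesCoeff
  split_ifs with hn
  · simp
  · rw [inf_eq_right.2 (pow_le_pow_right (by omega)), ← pow_succ',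
      show (n + 1).toNat = n.toNat + 1 by omega]

noncomputable def laurentReesAlgebra : Subalgebra R R[T;T⁻¹] :=
  coeffSubalgebra I.reesCoeff (by simp [reesCoeff]) I.reesCoeff_mul_le

noncomputable def extendedReesAlgebra : Subalgebra R R[T;T⁻¹] :=
  coeffSubalgebra (fun n => I ^ n.toNat) (by simp) I.pow_toNat_mul_pow_toNat_le

variable {I}

theorem C_mul_T_mem_laurentReesAlgebra {n : ℕ} {a : R} (ha : a ∈ I ^ n) :
    C a * T n ∈ I.laurentReesAlgebra :=
  C_mul_T_mem_coeffSubmodule <| by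
    rwa [reesCoeff, if_neg (Int.natCast_nonneg n).not_gt, Int.toNat_natCast]

theorem C_mul_T_mem_extendedReesAlgebra {n : ℤ} {a : R} (ha : a ∈ I ^ n.toNat) :
    C a * T n ∈ I.extendedReesAlgebra :=
  C_mul_T_mem_coeffSubmodule ha

variable (I)

theorem adjoin_eq_laurentReesAlgebra :
    Algebra.adjoin R ((fun a : R => algebraMap R R[T;T⁻¹] a * T 1) '' ↑I) =
      I.laurentReesAlgebra := by
  set S := Algebra.adjoin R ((fun a : R => algebraMap R R[T;T⁻¹] a * T 1) '' ↑I)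
  refine le_antisymm (Algebra.adjoin_le ?_) fun f hf =>
    coeffSubmodule_le (N := Subalgebra.toSubmodule S) (fun n a ha => ?_) hf
  · rintro _ ⟨a, ha, rfl⟩
    exact C_mul_T_mem_laurentReesAlgebra (n := 1) (by simpa using ha)
  · have hS : (reesAlgebra I).map Polynomial.toLaurentAlg ≤ S := by
      rw [← adjoin_monomial_eq_reesAlgebra, Subalgebra.map_le, Algebra.adjoin_le_iff]
      rintro _ ⟨a, ha, rfl⟩
      exact Algebra.subset_adjoin ⟨a, ha, by simp⟩
    unfold reesCoeff at ha
    split_ifs at ha with hn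
    · simp [(Submodule.mem_bot R).1 ha]
    · lift n to ℕ using not_lt.1 hn
      refine hS (Subalgebra.mem_map.2 ⟨_, reesAlgebra.monomial_mem.2 (by simpa using ha), ?_⟩)
      simp [Polynomial.toLaurent_C_mul_T]

theorem adjoin_eq_extendedReesAlgebra :
    Algebra.adjoin R
        ({T (-1)} ∪ (fun a : R => algebraMap R R[T;T⁻¹] a * T 1) '' ↑I) =
      I.extendedReesAlgebra := by
  set S := Algebra.adjoin R ({T (-1)} ∪ (fun a : R => algebraMap R R[T;T⁻¹] a * T 1) '' ↑I)
  refine le_antisymm (Algebra.adjoin_le ?_) fun f hf =>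
    coeffSubmodule_le (N := Subalgebra.toSubmodule S) (fun n a ha => ?_) hf
  · rintro _ (rfl | ⟨a, ha, rfl⟩)
    · simpa using C_mul_T_mem_extendedReesAlgebra (I := I) (n := -1) (a := 1) (by simp)
    · exact C_mul_T_mem_extendedReesAlgebra (n := 1) (by simpa using ha)
  · rw [Subalgebra.mem_toSubmodule]
    rcases lt_or_ge n 0 with hn | hn
    · have hT : C a * T n = algebraMap R R[T;T⁻¹] a * T (-1) ^ (-n).toNat := by
        rw [T_pow, C_eq_algebraMap]
        congr
        omega
      rw [hT]
      have hT1 : (T (-1) : R[T;T⁻¹]) ∈ S :=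
        Algebra.subset_adjoin (Set.mem_union_left _ (Set.mem_singleton _))
      exact mul_mem (Subalgebra.algebraMap_mem S a) (pow_mem hT1 _)
    · lift n to ℕ using hn
      have hE := I.adjoin_eq_laurentReesAlgebra ▸
        C_mul_T_mem_laurentReesAlgebra (by simpa using ha)
      exact Algebra.adjoin_mono Set.subset_union_right hE

theorem mem_smul_laurentReesAlgebra_iff {f : R[T;T⁻¹]} :
    f ∈ I • Subalgebra.toSubmodule I.laurentReesAlgebra ↔
      f ∈ I.laurentReesAlgebra ∧ T 1 * f ∈ I.extendedReesAlgebra := by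
  have h : I • Subalgebra.toSubmodule I.laurentReesAlgebra =
      coeffSubmodule I.reesCoeff ⊓ coeffSubmodule fun n => I ^ (n + 1).toNat := by
    rw [laurentReesAlgebra, toSubmodule_coeffSubalgebra, smul_coeffSubmodule,
      ← coeffSubmodule_inf]
    exact congrArg coeffSubmodule (funext I.mul_reesCoeff)
  rw [h, Submodule.mem_inf]
  exact and_congr Iff.rfl (T_mul_mem_coeffSubmodule_iff (F := fun n => I ^ n.toNat) 1).symm

theorem exists_T_one_mul_sub_mem {f : R[T;T⁻¹]} (hf : f ∈ I.extendedReesAlgebra) :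
    ∃ e ∈ I.laurentReesAlgebra, T 1 * (f - e) ∈ I.extendedReesAlgebra := by
  classical
  refine ⟨AddMonoidAlgebra.ofCoeff (f.coeff.filter (0 ≤ ·)), fun n => ?_,
    (T_mul_mem_coeffSubmodule_iff 1).2 fun n => ?_⟩
  · rw [AddMonoidAlgebra.coeff_ofCoeff, Finsupp.filter_apply, reesCoeff]
    split_ifs <;> first | omega | exact zero_mem _ | exact hf n
  · rw [AddMonoidAlgebra.coeff_sub, Finsupp.sub_apply, AddMonoidAlgebra.coeff_ofCoeff,
      Finsupp.filter_apply]
    split_ifs with h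
    · rw [sub_self]
      exact zero_mem _
    · simp [show (n + 1).toNat = 0 by omega]

end Ideal

theorem extended_rees_ring_quotient_iso_general
    (R : Type*) [CommRing R] (I : Ideal R) :
    let Z : LaurentPolynomial R := LaurentPolynomial.T 1
    let Zinv : LaurentPolynomial R := LaurentPolynomial.T (-1)
    -- the Rees ring `E = R[IZ]`:
    let E : Subalgebra R (LaurentPolynomial R) :=
      Algebra.adjoin R ((fun a : R => algebraMap R (LaurentPolynomial R) a * Z) '' ↑I)
    -- the extended Rees ring `Ê = R[Z⁻¹, IZ]`:
    let Ehat : Subalgebra R (LaurentPolynomial R) :=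
      Algebra.adjoin R
        ({Zinv} ∪ (fun a : R => algebraMap R (LaurentPolynomial R) a * Z) '' ↑I)
    -- `E ∩ Z⁻¹Ê = IE`:
    (∀ f : LaurentPolynomial R,
      (f ∈ E ∧ ∃ g ∈ Ehat, f = Zinv * g) ↔
      ∃ hf : f ∈ E, (⟨f, hf⟩ : E) ∈ I.map (algebraMap R ↥E)) ∧
    -- the induced isomorphism `Ê/(Z⁻¹Ê) ≅ E/IE`:
    Nonempty
      ((↥Ehat ⧸ Ideal.span
          {(⟨Zinv, Algebra.subset_adjoin (Set.mem_union_left _ rfl)⟩ : ↥Ehat)}) ≃+*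
        (↥E ⧸ I.map (algebraMap R ↥E))) := by
  intro Z Zinv E Ehat
  have hE : E = I.laurentReesAlgebra := I.adjoin_eq_laurentReesAlgebra
  have hEhat : Ehat = I.extendedReesAlgebra := I.adjoin_eq_extendedReesAlgebra
  have hIE : ∀ x : E, x ∈ I.map (algebraMap R E) ↔ ∃ g ∈ Ehat, (x : R[T;T⁻¹]) = Zinv * g := by
    have key : ∀ f ∈ E, f ∈ I • Subalgebra.toSubmodule E ↔ T 1 * f ∈ Ehat := by
      rw [hE, hEhat]
      exact fun f hf => I.mem_smul_laurentReesAlgebra_iff.trans (and_iff_right hf)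
    exact fun x => (Subalgebra.mem_map_algebraMap_iff I x).trans
      ((key x x.2).trans (exists_mem_eq_T_neg_mul_iff 1).symm)
  have hsum : ∀ f ∈ Ehat, ∃ e ∈ E, T 1 * (f - e) ∈ Ehat := by
    rw [hE, hEhat]
    exact fun f hf => I.exists_T_one_mul_sub_mem hf
  refine ⟨fun f => ⟨fun ⟨hf, hg⟩ => ⟨hf, (hIE ⟨f, hf⟩).2 hg⟩, fun ⟨hf, h⟩ => ⟨hf, (hIE _).1 h⟩⟩,
    Subalgebra.nonempty_quotient_span_singleton_ringEquiv
      (Algebra.adjoin_mono Set.subset_union_right) _ (fun f hf => ?_) hIE⟩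
  obtain ⟨e, he, h⟩ := hsum f hf
  exact ⟨e, he, (exists_mem_eq_T_neg_mul_iff 1).2 h⟩

/-- Let `R` be a nonnull ring, `I` an ideal, `E = R[IZ]` the Rees ring and
`Ê = R[Z⁻¹, IZ]` the extended Rees ring, both inside the Laurent polynomial ring
`R[Z, Z⁻¹]`.  Then `E ∩ Z⁻¹Ê = IE`, and this induces a ring isomorphism
`Ê/(Z⁻¹Ê) ≅ E/IE`. -/
theorem extended_rees_ring_quotient_iso
    (R : Type*) [CommRing R] [Nontrivial R] (I : Ideal R) :
    let Z : LaurentPolynomial R := LaurentPolynomial.T 1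
    let Zinv : LaurentPolynomial R := LaurentPolynomial.T (-1)
    -- the Rees ring `E = R[IZ]`:
    let E : Subalgebra R (LaurentPolynomial R) :=
      Algebra.adjoin R ((fun a : R => algebraMap R (LaurentPolynomial R) a * Z) '' ↑I)
    -- the extended Rees ring `Ê = R[Z⁻¹, IZ]`:
    let Ehat : Subalgebra R (LaurentPolynomial R) :=
      Algebra.adjoin R
        ({Zinv} ∪ (fun a : R => algebraMap R (LaurentPolynomial R) a * Z) '' ↑I)
    -- `E ∩ Z⁻¹Ê = IE`:
    (∀ f : LaurentPolynomial R,
      (f ∈ E ∧ ∃ g ∈ Ehat, f = Zinv * g) ↔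
      ∃ hf : f ∈ E, (⟨f, hf⟩ : E) ∈ I.map (algebraMap R ↥E)) ∧
    -- the induced isomorphism `Ê/(Z⁻¹Ê) ≅ E/IE`:
    Nonempty
      ((↥Ehat ⧸ Ideal.span
          {(⟨Zinv, Algebra.subset_adjoin (Set.mem_union_left _ rfl)⟩ : ↥Ehat)}) ≃+*
        (↥E ⧸ I.map (algebraMap R ↥E))) :=
  extended_rees_ring_quotient_iso_general R I
end
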